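/- Let Υ = c·H/(B + σ²) where H ~ Exp(1) is independent of the nonnegative random variable B, and c, σ² > 0. Then E[sqrt(1 - 1/(1+Υ)²)]·log₂(e) = ∫₀^{log₂(e)} exp(-z(v)σ²/c)·L_B(z(v)/c) dv, where z(v) = (1 - v²/log₂²(e))^{-1/2} - 1 and L_B is the Laplace transform of B. -/
import Mathlib


open MeasureTheory ProbabilityTheory
open scoped ProbabilityTheory

noncomputable def log2e : ℝ := Real.logb 2 (Real.exp 1)

noncomputable def zinv (v : ℝ) : ℝ := 1 / Real.sqrt (1 - v ^ 2 / log2e ^ 2) - 1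

lemma log2e_pos : 0 < log2e := by
  unfold log2e
  rw [Real.logb, Real.log_exp]
  exact div_pos one_pos (Real.log_pos one_lt_two)

/-- the inner substitution function -/
noncomputable def zfun (t : ℝ) : ℝ := 1 / Real.sqrt (1 - t ^ 2) - 1

lemma zfun_nonneg {t : ℝ} (ht : t ∈ Set.Ioo (0:ℝ) 1) : 0 ≤ zfun t := by
  obtain ⟨h0, h1⟩ := ht
  have hs : 0 < 1 - t ^ 2 := by nlinarith
  have h1' : Real.sqrt (1 - t ^ 2) ≤ 1 := by
    have := Real.sqrt_le_sqrt (show 1 - t ^ 2 ≤ 1 by nlinarith)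
    simpa using this
  have h2 : 0 < Real.sqrt (1 - t ^ 2) := Real.sqrt_pos.mpr hs
  have : 1 ≤ 1 / Real.sqrt (1 - t ^ 2) := one_le_one_div h2 h1'
  unfold zfun; linarith

lemma zfun_lt_iff {t u : ℝ} (ht : t ∈ Set.Ioo (0:ℝ) 1) (hu : 0 ≤ u) :
    t < Real.sqrt (1 - 1 / (1 + u) ^ 2) ↔ zfun t < u := by
  obtain ⟨h0, h1⟩ := ht
  have hs : 0 < 1 - t ^ 2 := by nlinarith
  have hup : (0:ℝ) < 1 + u := by linarith
  have hup2 : (0:ℝ) < (1 + u) ^ 2 := by positivity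
  have hsq : 0 < Real.sqrt (1 - t ^ 2) := Real.sqrt_pos.mpr hs
  rw [Real.lt_sqrt h0.le]
  constructor
  · intro h
    have h2 : 1 / (1 + u) ^ 2 < 1 - t ^ 2 := by linarith
    have h3 : 1 / (1 - t ^ 2) < (1 + u) ^ 2 := by
      rw [div_lt_iff₀ hs]
      rw [div_lt_iff₀ hup2] at h2
      nlinarith
    have h4 : Real.sqrt (1 / (1 - t ^ 2)) < 1 + u := by
      rw [Real.sqrt_lt' hup]; exact h3
    rw [one_div, Real.sqrt_inv, ← one_div] at h4
    unfold zfun; linarith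
  · intro h
    unfold zfun at h
    have h4 : Real.sqrt (1 / (1 - t ^ 2)) < 1 + u := by
      rw [one_div, Real.sqrt_inv, ← one_div]; linarith
    have h3 : 1 / (1 - t ^ 2) < (1 + u) ^ 2 := by
      rw [Real.sqrt_lt' hup] at h4; exact h4
    have h2 : 1 / (1 + u) ^ 2 < 1 - t ^ 2 := by
      rw [div_lt_iff₀ hup2]
      rw [div_lt_iff₀ hs] at h3
      nlinarith
    linarith

/-- tail probability of the SINR -/
lemma tail_eq {Ω : Type*} [MeasureSpace Ω] [IsProbabilityMeasure (ℙ : Measure Ω)]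
    (H B : Ω → ℝ) (hH : Measurable H) (hB : Measurable B)
    (hBpos : ∀ ω, 0 ≤ B ω)
    (hIndep : IndepFun H B ℙ)
    (hExp : ∀ t : ℝ, 0 ≤ t → ℙ {ω | t < H ω} = ENNReal.ofReal (Real.exp (-t)))
    (c σ2 : ℝ) (hc : 0 < c) (hσ2 : 0 < σ2) (z : ℝ) (hz : 0 ≤ z) :
    (ℙ {ω | z * (B ω + σ2) / c < H ω}).toReal
      = Real.exp (-(z * σ2 / c)) * ∫ ω, Real.exp (-((z / c) * B ω)) := by
  have hmap : (ℙ : Measure Ω).map (fun ω => (B ω, H ω)) = ((ℙ : Measure Ω).map B).prod ((ℙ : Measure Ω).map H) :=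
    (indepFun_iff_map_prod_eq_prod_map_map hB.aemeasurable hH.aemeasurable).mp hIndep.symm
  have hS : MeasurableSet {p : ℝ × ℝ | z * (p.1 + σ2) / c < p.2} :=
    measurableSet_lt (((measurable_fst.add_const σ2).const_mul z).div_const c) measurable_snd
  have h1 : ℙ {ω | z * (B ω + σ2) / c < H ω}
      = (((ℙ : Measure Ω).map B).prod ((ℙ : Measure Ω).map H)) {p : ℝ × ℝ | z * (p.1 + σ2) / c < p.2} := by
    rw [← hmap, Measure.map_apply (hB.prodMk hH) hS]
    rfl
  rw [h1, Measure.prod_apply hS]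
  have hBP : IsProbabilityMeasure ((ℙ : Measure Ω).map B) :=
    Measure.isProbabilityMeasure_map hB.aemeasurable
  have haeb : ∀ᵐ b ∂((ℙ : Measure Ω).map B), 0 ≤ b := by
    exact (ae_map_iff hB.aemeasurable (measurableSet_Ici : MeasurableSet (Set.Ici (0:ℝ)))).mpr
      (Filter.Eventually.of_forall hBpos)
  have h2 : ∫⁻ b, ((ℙ : Measure Ω).map H) (Prod.mk b ⁻¹' {p : ℝ × ℝ | z * (p.1 + σ2) / c < p.2})
        ∂((ℙ : Measure Ω).map B)
      = ∫⁻ b, ENNReal.ofReal (Real.exp (-(z * σ2 / c)) * Real.exp (-(z / c * b)))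
        ∂((ℙ : Measure Ω).map B) := by
    refine lintegral_congr_ae ?_
    filter_upwards [haeb] with b hb
    have hpre : Prod.mk b ⁻¹' {p : ℝ × ℝ | z * (p.1 + σ2) / c < p.2}
        = Set.Ioi (z * (b + σ2) / c) := by
      ext h; simp [Set.mem_Ioi]
    rw [hpre, Measure.map_apply hH measurableSet_Ioi]
    have harg : 0 ≤ z * (b + σ2) / c := by positivity
    have := hExp (z * (b + σ2) / c) harg
    have hpre2 : H ⁻¹' Set.Ioi (z * (b + σ2) / c) = {ω | z * (b + σ2) / c < H ω} := rfl
    rw [hpre2, this, ← Real.exp_add]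
    congr 2
    field_simp
    ring
  rw [h2]
  have hmeas : Measurable fun b : ℝ => ENNReal.ofReal (Real.exp (-(z / c * b))) :=
    (Real.continuous_exp.comp ((continuous_const.mul continuous_id).neg)).measurable.ennreal_ofReal
  have h3 : ∫⁻ b, ENNReal.ofReal (Real.exp (-(z * σ2 / c)) * Real.exp (-(z / c * b)))
        ∂((ℙ : Measure Ω).map B)
      = ENNReal.ofReal (Real.exp (-(z * σ2 / c)))
        * ∫⁻ b, ENNReal.ofReal (Real.exp (-(z / c * b))) ∂((ℙ : Measure Ω).map B) := by
    rw [← lintegral_const_mul _ hmeas]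
    congr 1
    ext b
    rw [ENNReal.ofReal_mul (Real.exp_nonneg _)]
  rw [h3]
  have hint : Integrable (fun b : ℝ => Real.exp (-(z / c * b))) ((ℙ : Measure Ω).map B) := by
    refine Integrable.mono' (integrable_const 1)
      (Real.continuous_exp.comp ((continuous_const.mul continuous_id).neg)).aestronglyMeasurable ?_
    filter_upwards [haeb] with b hb
    rw [Real.norm_eq_abs, abs_of_nonneg (Real.exp_nonneg _)]
    have : -(z / c * b) ≤ 0 := by
      have : 0 ≤ z / c * b := by positivity
      linarith
    calc Real.exp (-(z / c * b)) ≤ Real.exp 0 := Real.exp_le_exp.mpr this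
      _ = 1 := Real.exp_zero
  have h4 : ∫⁻ b, ENNReal.ofReal (Real.exp (-(z / c * b))) ∂((ℙ : Measure Ω).map B)
      = ENNReal.ofReal (∫ b, Real.exp (-(z / c * b)) ∂((ℙ : Measure Ω).map B)) :=
    (ofReal_integral_eq_lintegral_ofReal hint
      (Filter.Eventually.of_forall fun b => Real.exp_nonneg _)).symm
  rw [h4, ← ENNReal.ofReal_mul (Real.exp_nonneg _), ENNReal.toReal_ofReal]
  · congr 1
    rw [integral_map hB.aemeasurable hint.1]
  · have : 0 ≤ ∫ b, Real.exp (-(z / c * b)) ∂((ℙ : Measure Ω).map B) :=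
      integral_nonneg fun b => Real.exp_nonneg _
    positivity

/-- Average square-root channel dispersion of a fading channel with random
interference power. -/
theorem avg_sqrt_dispersion
    {Ω : Type*} [MeasureSpace Ω] [IsProbabilityMeasure (ℙ : Measure Ω)]
    (H B : Ω → ℝ) (hH : Measurable H) (hB : Measurable B)
    (hHpos : ∀ ω, 0 ≤ H ω) (hBpos : ∀ ω, 0 ≤ B ω)
    (hIndep : IndepFun H B ℙ)
    (hExp : ∀ t : ℝ, 0 ≤ t → ℙ {ω | t < H ω} = ENNReal.ofReal (Real.exp (-t)))
    (c σ2 : ℝ) (hc : 0 < c) (hσ2 : 0 < σ2)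
    (Υ : Ω → ℝ) (hΥ : ∀ ω, Υ ω = c * H ω / (B ω + σ2)) :
    (∫ ω, Real.sqrt (1 - 1 / (1 + Υ ω) ^ 2)) * log2e
      = ∫ v in Set.Ioo (0 : ℝ) log2e,
          Real.exp (-(zinv v * σ2 / c)) * ∫ ω, Real.exp (-((zinv v / c) * B ω)) := by
  have hL : 0 < log2e := log2e_pos
  set G : ℝ → ℝ := fun t =>
    Real.exp (-(zfun t * σ2 / c)) * ∫ ω, Real.exp (-((zfun t / c) * B ω)) with hG
  have hΥeq : Υ = fun ω => c * H ω / (B ω + σ2) := funext hΥ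
  have hΥm : Measurable Υ := by
    rw [hΥeq]; exact (hH.const_mul c).div (hB.add_const σ2)
  have hΥpos : ∀ ω, 0 ≤ Υ ω := fun ω => by
    rw [hΥ ω]
    have hb : 0 < B ω + σ2 := by have := hBpos ω; linarith
    exact div_nonneg (mul_nonneg hc.le (hHpos ω)) hb.le
  set f : Ω → ℝ := fun ω => Real.sqrt (1 - 1 / (1 + Υ ω) ^ 2) with hf
  have hfm : Measurable f := by
    apply Measurable.sqrt
    exact measurable_const.sub (measurable_const.div ((measurable_const.add hΥm).pow_const 2))
  have hfle : ∀ ω, f ω ≤ 1 := fun ω => by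
    rw [hf]
    have h1 : (0:ℝ) < 1 + Υ ω := by have := hΥpos ω; linarith
    have : 1 - 1 / (1 + Υ ω) ^ 2 ≤ 1 := by
      have : 0 ≤ 1 / (1 + Υ ω) ^ 2 := by positivity
      linarith
    calc Real.sqrt (1 - 1 / (1 + Υ ω) ^ 2) ≤ Real.sqrt 1 := Real.sqrt_le_sqrt this
      _ = 1 := Real.sqrt_one
  have hfint : Integrable f ℙ := by
    refine Integrable.mono' (integrable_const 1) hfm.aestronglyMeasurable ?_
    exact Filter.Eventually.of_forall fun ω => by
      rw [Real.norm_eq_abs, abs_of_nonneg (Real.sqrt_nonneg _)]; exact hfle ω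
  have hlayer : ∫ ω, f ω = ∫ t in Set.Ioi (0:ℝ), (ℙ {ω | t < f ω}).toReal :=
    hfint.integral_eq_integral_meas_lt
      (Filter.Eventually.of_forall fun ω => Real.sqrt_nonneg _)
  have hFval : ∀ t ∈ Set.Ioi (0:ℝ),
      (ℙ {ω | t < f ω}).toReal = (Set.Ioo (0:ℝ) 1).indicator G t := by
    intro t ht
    by_cases h1 : t < 1
    · have htIoo : t ∈ Set.Ioo (0:ℝ) 1 := ⟨ht, h1⟩
      rw [Set.indicator_of_mem htIoo]
      have hset : {ω | t < f ω} = {ω | zfun t * (B ω + σ2) / c < H ω} := by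
        ext ω
        simp only [Set.mem_setOf_eq, hf]
        rw [zfun_lt_iff htIoo (hΥpos ω), hΥ ω]
        have hb : (0:ℝ) < B ω + σ2 := by have := hBpos ω; linarith
        rw [lt_div_iff₀ hb, ← div_lt_iff₀' hc]
      rw [hset]
      exact tail_eq H B hH hB hBpos hIndep hExp c σ2 hc hσ2 (zfun t) (zfun_nonneg htIoo)
    · rw [Set.indicator_of_notMem (by simp [Set.mem_Ioo]; intro _; linarith)]
      have hset : {ω | t < f ω} = ∅ := by
        ext ω
        simp only [Set.mem_setOf_eq, Set.mem_empty_iff_false, iff_false, not_lt]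
        calc f ω ≤ 1 := hfle ω
          _ ≤ t := le_of_not_gt h1
      rw [hset]
      simp
  have hstep : ∫ ω, f ω = ∫ t in Set.Ioo (0:ℝ) 1, G t := by
    rw [hlayer, setIntegral_congr_fun measurableSet_Ioi hFval,
      setIntegral_indicator measurableSet_Ioo,
      Set.inter_eq_self_of_subset_right Set.Ioo_subset_Ioi_self]
  have hzinv : ∀ v : ℝ, zinv v = zfun (v / log2e) := by
    intro v
    unfold zinv zfun
    rw [div_pow]
  have hRHS : ∫ v in Set.Ioo (0 : ℝ) log2e,
        Real.exp (-(zinv v * σ2 / c)) * ∫ ω, Real.exp (-((zinv v / c) * B ω))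
      = ∫ v in Set.Ioo (0 : ℝ) log2e, G (v / log2e) := by
    refine setIntegral_congr_fun measurableSet_Ioo fun v _ => ?_
    rw [hG]
    simp only [hzinv v]
  have hsub : ∫ v in Set.Ioo (0 : ℝ) log2e, G (v / log2e)
      = log2e * ∫ t in Set.Ioo (0:ℝ) 1, G t := by
    rw [← integral_Ioc_eq_integral_Ioo, ← integral_Ioc_eq_integral_Ioo,
      ← intervalIntegral.integral_of_le hL.le, ← intervalIntegral.integral_of_le (by norm_num : (0:ℝ) ≤ 1)]
    rw [intervalIntegral.integral_comp_div (f := G) hL.ne']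
    rw [zero_div, div_self hL.ne']
    simp
  rw [hstep, hRHS, hsub]
  ring
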